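/- arXiv:1810.02273 — 3 statements merged into one kernel-verified Lean document; each statement's English description precedes it below -/
import Mathlib

section
/- For complex numbers α, β, γ, δ, X with α ≠ β, γ ≠ δ and all products αγX, αδX, βγX, βδX of absolute value less than 1, the series ∑_{m≥0} X^m · (α^{m+1} − β^{m+1})/(α − β) · (γ^{m+1} − δ^{m+1})/(γ − δ) converges absolutely and equals (1 − αβγδX²)/((1 − αγX)(1 − αδX)(1 − βγX)(1 − βδX)). -/
/-! Expanding the two divided differences, `X^m h_m(α,β) h_m(γ,δ)` is a fixed linear combination
of the four geometric sequences `(αγX)^m, (αδX)^m, (βγX)^m, (βδX)^m`. Summing each geometric series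
and recombining the four fractions gives the closed form. -/

section Field

variable {K : Type*} [Field K]

theorem pow_mul_div_sub_mul_div_sub_eq {α β γ δ : K} (hab : α ≠ β) (hgd : γ ≠ δ) (X : K)
    (m : ℕ) :
    X ^ m * ((α ^ (m + 1) - β ^ (m + 1)) / (α - β)) * ((γ ^ (m + 1) - δ ^ (m + 1)) / (γ - δ)) =
      (α * γ * (α * γ * X) ^ m - α * δ * (α * δ * X) ^ m - β * γ * (β * γ * X) ^ m
        + β * δ * (β * δ * X) ^ m) / ((α - β) * (γ - δ)) := by
  have := sub_ne_zero.mpr hab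
  have := sub_ne_zero.mpr hgd
  field_simp
  ring

theorem inv_one_sub_combination_div_eq {α β γ δ X : K} (hab : α ≠ β) (hgd : γ ≠ δ)
    (h1 : 1 - α * γ * X ≠ 0) (h2 : 1 - α * δ * X ≠ 0)
    (h3 : 1 - β * γ * X ≠ 0) (h4 : 1 - β * δ * X ≠ 0) :
    (α * γ * (1 - α * γ * X)⁻¹ - α * δ * (1 - α * δ * X)⁻¹
        - β * γ * (1 - β * γ * X)⁻¹ + β * δ * (1 - β * δ * X)⁻¹) / ((α - β) * (γ - δ)) =
      (1 - α * β * γ * δ * X ^ 2) /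
        ((1 - α * γ * X) * (1 - α * δ * X) * (1 - β * γ * X) * (1 - β * δ * X)) := by
  have := sub_ne_zero.mpr hab
  have := sub_ne_zero.mpr hgd
  simp only [← div_eq_mul_inv]
  rw [div_sub_div _ _ h1 h2, div_sub_div _ _ (mul_ne_zero h1 h2) h3,
    div_add_div _ _ (mul_ne_zero (mul_ne_zero h1 h2) h3) h4, div_div,
    div_eq_div_iff (by positivity) (by positivity)]
  ring

end Field

theorem hasSum_pow_mul_div_sub_mul_div_sub {K : Type*} [NormedField K] {α β γ δ X : K}
    (hab : α ≠ β) (hgd : γ ≠ δ)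
    (h1 : ‖α * γ * X‖ < 1) (h2 : ‖α * δ * X‖ < 1)
    (h3 : ‖β * γ * X‖ < 1) (h4 : ‖β * δ * X‖ < 1) :
    HasSum (fun m : ℕ => X ^ m * ((α ^ (m + 1) - β ^ (m + 1)) / (α - β)) *
        ((γ ^ (m + 1) - δ ^ (m + 1)) / (γ - δ)))
      ((1 - α * β * γ * δ * X ^ 2) /
        ((1 - α * γ * X) * (1 - α * δ * X) * (1 - β * γ * X) * (1 - β * δ * X))) := by
  have geom {c : K} (h : ‖c * X‖ < 1) := (hasSum_geometric_of_norm_lt_one h).mul_left c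
  have hne {c : K} (h : ‖c * X‖ < 1) : 1 - c * X ≠ 0 := (isUnit_one_sub_of_norm_lt_one h).ne_zero
  rw [funext (pow_mul_div_sub_mul_div_sub_eq hab hgd X),
    ← inv_one_sub_combination_div_eq hab hgd (hne h1) (hne h2) (hne h3) (hne h4)]
  exact ((((geom h1).sub (geom h2)).sub (geom h3)).add (geom h4)).div_const _

/-- For complex numbers `α, β, γ, δ, X` with `α ≠ β`, `γ ≠ δ` and all of
`|αγX|, |αδX|, |βγX|, |βδX| < 1`, the series
`∑_{m ≥ 0} X^m · (α^{m+1} − β^{m+1})/(α − β) · (γ^{m+1} − δ^{m+1})/(γ − δ)`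
converges absolutely and equals
`(1 − αβγδX²)/((1 − αγX)(1 − αδX)(1 − βγX)(1 − βδX))`. -/
theorem stmt1 (α β γ δ X : ℂ) (hab : α ≠ β) (hgd : γ ≠ δ)
    (h1 : ‖α * γ * X‖ < 1) (h2 : ‖α * δ * X‖ < 1)
    (h3 : ‖β * γ * X‖ < 1) (h4 : ‖β * δ * X‖ < 1) :
    Summable (fun m : ℕ =>
      ‖X ^ m * ((α ^ (m + 1) - β ^ (m + 1)) / (α - β)) *
        ((γ ^ (m + 1) - δ ^ (m + 1)) / (γ - δ))‖) ∧
      ∑' m : ℕ, X ^ m * ((α ^ (m + 1) - β ^ (m + 1)) / (α - β)) *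
          ((γ ^ (m + 1) - δ ^ (m + 1)) / (γ - δ)) =
        (1 - α * β * γ * δ * X ^ 2) /
          ((1 - α * γ * X) * (1 - α * δ * X) * (1 - β * γ * X) * (1 - β * δ * X)) := by
  have hs := hasSum_pow_mul_div_sub_mul_div_sub hab hgd h1 h2 h3 h4
  exact ⟨summable_norm_iff.mpr hs.summable, hs.tsum_eq⟩
end

section
/- Let ℓ be a prime, E the unramified quadratic extension of ℚ_ℓ, σ = I_{GL₂(E)}(χ,ψ) a spherical principal series with α = χ(ℓ), β = ψ(ℓ), normalized Whittaker model 𝒲, and normalized spherical vector φ₀. Let η be an unramified character of ℚ_ℓ^× and L(As(σ⊗η), s) = [(1 − αη(ℓ)ℓ^{−s})(1 − βη(ℓ)ℓ^{−s})(1 − αβη(ℓ)²ℓ^{−2s})]^{−1}. Then for Re(s) sufficiently large, L(As(σ⊗η),s)^{−1} ∫_{ℚ_ℓ^×} |y|^{s−1} η(y) 𝒲_{φ₀}(diag(y,1)) d^×y = (1 − αβη(ℓ)²ℓ^{−2s}), i.e. the zeta integral Z(σ,η,φ₀,s) equals L(η²χ_σ, 2s)^{−1} where χ_σ = χψ. 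-/
/-!
The valuation `v : ℚ_ℓ^× → ℤ` pushes the Haar measure forward to counting measure on `ℤ`, because
its fibres are translates of the unit sphere. On the fibre `v = m` we have `η = η(ℓ)^m` and
`|y|^{s-1} 𝒲(diag(y,1)) = ℓ^{-ms} (α^{m+1} - β^{m+1})/(α - β)`, so the zeta integral is the
generating series `∑ₘ (α^{m+1} - β^{m+1})/(α - β) tᵐ = ((1 - αt)(1 - βt))⁻¹` at `t = η(ℓ) ℓ^{-s}`,
which converges absolutely once `Re s` is large.
-/

open MeasureTheory

section CountMeasure

variable {X ι E : Type*} [MeasurableSpace X] [MeasurableSpace ι] [Countable ι]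
  [DiscreteMeasurableSpace ι] [NormedAddCommGroup E]
  {μ : Measure X} {v : X → ι}

lemma integrable_comp_of_map_eq_count (hv : Measurable v) (hμ : μ.map v = Measure.count)
    {F : ι → E} (hF : Summable fun n => ‖F n‖) : Integrable (fun x => F (v x)) μ :=
  (hμ ▸ integrable_count_iff.mpr hF : Integrable F (μ.map v)).comp_measurable hv

lemma integral_comp_eq_tsum_of_map_eq_count [NormedSpace ℝ E] [CompleteSpace E]
    (hv : Measurable v) (hμ : μ.map v = Measure.count) {F : ι → E} (hF : Summable fun n => ‖F n‖) :
    ∫ x, F (v x) ∂μ = ∑' n, F n := by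
  rw [← integral_map hv.aemeasurable StronglyMeasurable.of_discrete.aestronglyMeasurable, hμ,
    integral_countable (integrable_count_iff.mpr hF)]
  simp

end CountMeasure

lemma one_sub_ne_zero_of_norm_lt_one {R : Type*} [NormedRing R] [NormOneClass R] {x : R}
    (hx : ‖x‖ < 1) : 1 - x ≠ 0 :=
  sub_ne_zero.mpr fun h => by simp [← h] at hx

lemma hasSum_pow_sub_pow_div_sub_mul_pow {𝕜 : Type*} [NormedField 𝕜] [CompleteSpace 𝕜]
    {α β t : 𝕜} (hαβ : α ≠ β) (hα : ‖α * t‖ < 1) (hβ : ‖β * t‖ < 1) :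
    HasSum (fun m : ℕ => (α ^ (m + 1) - β ^ (m + 1)) / (α - β) * t ^ m)
      ((1 - α * t)⁻¹ * (1 - β * t)⁻¹) := by
  convert (((hasSum_geometric_of_norm_lt_one hα).mul_left α).sub
    ((hasSum_geometric_of_norm_lt_one hβ).mul_left β)).div_const (α - β) using 1
  · ext m; rw [mul_pow, mul_pow]; ring
  · rw [eq_div_iff (sub_ne_zero.mpr hαβ)]
    linear_combination α * (1 - α * t)⁻¹ * inv_mul_cancel₀ (one_sub_ne_zero_of_norm_lt_one hβ) -
      β * (1 - β * t)⁻¹ * inv_mul_cancel₀ (one_sub_ne_zero_of_norm_lt_one hα)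

lemma exists_norm_mul_natCast_cpow_neg_lt_one {ℓ : ℕ} (hℓ : 1 < ℓ) (c : ℂ) :
    ∃ r : ℝ, ∀ s : ℂ, r < s.re → ‖c * (ℓ : ℂ) ^ (-s)‖ < 1 := by
  have hℓ' : (1 : ℝ) < ℓ := by exact_mod_cast hℓ
  refine ⟨Real.logb ℓ (‖c‖ + 1), fun s hs => ?_⟩
  have hpow : ‖c‖ + 1 < (ℓ : ℝ) ^ s.re := by
    rwa [← Real.logb_lt_iff_lt_rpow hℓ' (by positivity)]
  rw [norm_mul, Complex.norm_natCast_cpow_of_pos (by omega), Complex.neg_re,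
    Real.rpow_neg (by positivity), ← div_eq_mul_inv, div_lt_one (by positivity)]
  linarith

lemma natCast_zpow_neg_cpow_sub_one_mul_inv_pow {ℓ : ℕ} (hℓ : ℓ ≠ 0) (m : ℕ) (s : ℂ) :
    (((ℓ : ℝ) ^ (-(m : ℤ)) : ℝ) : ℂ) ^ (s - 1) * ((ℓ : ℂ) ^ m)⁻¹ = ((ℓ : ℂ) ^ (-s)) ^ m := by
  have hcast : (((ℓ : ℝ) ^ (-(m : ℤ)) : ℝ) : ℂ) = (((ℓ ^ m : ℕ) : ℝ) : ℂ)⁻¹ := by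
    push_cast; rw [zpow_neg, zpow_natCast]
  rw [hcast, Complex.inv_cpow_ofReal_nonneg (Nat.cast_nonneg _), Complex.ofReal_natCast,
    Nat.cast_pow, ← Complex.natCast_cpow_natCast_mul, ← Complex.cpow_nat_mul, ← mul_inv,
    ← Complex.cpow_natCast, ← Complex.cpow_add _ _ (Nat.cast_ne_zero.mpr hℓ), ← Complex.cpow_neg]
  ring_nf

namespace Padic

variable {p : ℕ} [Fact p.Prime]

lemma norm_units_eq_zpow_neg_iff (y : ℚ_[p]ˣ) (n : ℤ) :
    ‖(y : ℚ_[p])‖ = (p : ℝ) ^ (-n) ↔ (y : ℚ_[p]).valuation = n := by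
  have hp : (1 : ℝ) < p := by exact_mod_cast (Fact.out : p.Prime).one_lt
  rw [norm_eq_zpow_neg_valuation y.ne_zero,
    (zpow_right_injective₀ (by positivity) hp.ne').eq_iff, neg_inj]

lemma norm_units_eq_one_iff (y : ℚ_[p]ˣ) : ‖(y : ℚ_[p])‖ = 1 ↔ (y : ℚ_[p]).valuation = 0 := by
  simpa using norm_units_eq_zpow_neg_iff y 0

lemma valuation_units_mul (x y : ℚ_[p]ˣ) :
    ((x * y : ℚ_[p]ˣ) : ℚ_[p]).valuation = (x : ℚ_[p]).valuation + (y : ℚ_[p]).valuation := by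
  rw [Units.val_mul, valuation_mul x.ne_zero y.ne_zero]

lemma valuation_units_zpow (x : ℚ_[p]ˣ) (n : ℤ) :
    ((x ^ n : ℚ_[p]ˣ) : ℚ_[p]).valuation = n * (x : ℚ_[p]).valuation := by
  rw [Units.val_zpow_eq_zpow_val, valuation_zpow]

lemma measurable_valuation_units [MeasurableSpace ℚ_[p]ˣ] [BorelSpace ℚ_[p]ˣ] :
    Measurable fun y : ℚ_[p]ˣ => (y : ℚ_[p]).valuation := by
  refine measurable_to_countable' fun n => ?_
  have hfiber : (fun y : ℚ_[p]ˣ => (y : ℚ_[p]).valuation) ⁻¹' {n} =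
      (fun y : ℚ_[p]ˣ => ‖(y : ℚ_[p])‖) ⁻¹' {(p : ℝ) ^ (-n)} := by
    ext y
    exact (norm_units_eq_zpow_neg_iff y n).symm
  rw [hfiber]
  exact (continuous_norm.comp Units.continuous_val).measurable (measurableSet_singleton _)

lemma measure_valuation_units_preimage_singleton [MeasurableSpace ℚ_[p]ˣ] [BorelSpace ℚ_[p]ˣ]
    (ν : Measure ℚ_[p]ˣ) [ν.IsMulLeftInvariant] (hν : ν {y : ℚ_[p]ˣ | ‖(y : ℚ_[p])‖ = 1} = 1)
    (n : ℤ) : ν ((fun y : ℚ_[p]ˣ => (y : ℚ_[p]).valuation) ⁻¹' {n}) = 1 := by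
  let ϖ : ℚ_[p]ˣ := Units.mk0 p (by exact_mod_cast (Fact.out : p.Prime).ne_zero)
  have hfiber : (fun y : ℚ_[p]ˣ => (y : ℚ_[p]).valuation) ⁻¹' {n} =
      (fun y => ϖ ^ (-n) * y) ⁻¹' {y : ℚ_[p]ˣ | ‖(y : ℚ_[p])‖ = 1} := by
    ext y
    simp only [Set.mem_preimage, Set.mem_singleton_iff, Set.mem_ofPred_eq,
      norm_units_eq_one_iff, valuation_units_mul, valuation_units_zpow, ϖ, Units.val_mk0,
      valuation_p]
    omega
  rw [hfiber, measure_preimage_mul, hν]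

lemma map_valuation_units_eq_count [MeasurableSpace ℚ_[p]ˣ] [BorelSpace ℚ_[p]ˣ]
    (ν : Measure ℚ_[p]ˣ) [ν.IsMulLeftInvariant] (hν : ν {y : ℚ_[p]ˣ | ‖(y : ℚ_[p])‖ = 1} = 1) :
    ν.map (fun y : ℚ_[p]ˣ => (y : ℚ_[p]).valuation) = Measure.count :=
  Measure.ext_of_singleton fun n => by
    rw [Measure.map_apply measurable_valuation_units (measurableSet_singleton n),
      measure_valuation_units_preimage_singleton ν hν, Measure.count_singleton]

lemma apply_units_eq_zpow_valuation {G : Type*} [Group G] (η : ℚ_[p]ˣ →* G)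
    (hη : ∀ u : ℚ_[p]ˣ, ‖(u : ℚ_[p])‖ = 1 → η u = 1)
    {ϖ : ℚ_[p]ˣ} (hϖ : ‖(ϖ : ℚ_[p])‖ = (p : ℝ)⁻¹) (y : ℚ_[p]ˣ) :
    η y = η ϖ ^ (y : ℚ_[p]).valuation := by
  have hϖv : (ϖ : ℚ_[p]).valuation = 1 := by
    rw [← norm_units_eq_zpow_neg_iff, hϖ, zpow_neg_one]
  have hu : ‖((ϖ ^ (-(y : ℚ_[p]).valuation) * y : ℚ_[p]ˣ) : ℚ_[p])‖ = 1 := by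
    rw [norm_units_eq_one_iff, valuation_units_mul, valuation_units_zpow, hϖv]
    ring
  calc η y = η (ϖ ^ (y : ℚ_[p]).valuation * (ϖ ^ (-(y : ℚ_[p]).valuation) * y)) := by group
    _ = η ϖ ^ (y : ℚ_[p]).valuation := by rw [map_mul, hη _ hu, mul_one, map_zpow]

end Padic

open Padic in
lemma cpow_norm_mul_mul_eq_extend_valuation {p : ℕ} [Fact p.Prime] {α β e : ℂ}
    {η W : ℚ_[p]ˣ → ℂ} (hη : ∀ y, η y = e ^ (y : ℚ_[p]).valuation)
    (hW0 : ∀ y : ℚ_[p]ˣ, 1 < ‖(y : ℚ_[p])‖ → W y = 0)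
    (hWm : ∀ (m : ℕ) (y : ℚ_[p]ˣ), ‖(y : ℚ_[p])‖ = (p : ℝ) ^ (-(m : ℤ)) →
      W y = ((p : ℂ) ^ m)⁻¹ * ((α ^ (m + 1) - β ^ (m + 1)) / (α - β))) (s : ℂ) (y : ℚ_[p]ˣ) :
    ((‖(y : ℚ_[p])‖ : ℝ) : ℂ) ^ (s - 1) * η y * W y =
      Function.extend ((↑) : ℕ → ℤ)
        (fun m => (α ^ (m + 1) - β ^ (m + 1)) / (α - β) * (e * (p : ℂ) ^ (-s)) ^ m) 0
        (y : ℚ_[p]).valuation := by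
  rcases lt_or_ge (y : ℚ_[p]).valuation 0 with hneg | hnonneg
  · rw [hW0 y ?_, mul_zero, Function.extend_apply' _ _ _ ?_, Pi.zero_apply]
    · rintro ⟨m, hm⟩
      omega
    · exact not_le.mp fun h => hneg.not_ge ((norm_le_one_iff_val_nonneg _).mp h)
  · obtain ⟨m, hm⟩ := Int.eq_ofNat_of_zero_le hnonneg
    have hnorm : ‖(y : ℚ_[p])‖ = (p : ℝ) ^ (-(m : ℤ)) := (norm_units_eq_zpow_neg_iff y m).mpr hm
    rw [hm, Nat.cast_injective.extend_apply, hη, hm, hWm m y hnorm, hnorm, zpow_natCast]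
    linear_combination (e ^ m * ((α ^ (m + 1) - β ^ (m + 1)) / (α - β))) *
      natCast_zpow_neg_cpow_sub_one_mul_inv_pow (Fact.out : p.Prime).ne_zero m s

/-- Zeta integral at the normalized spherical vector, inert case: for `σ` a spherical
principal series of `GL₂(E)` (`E/ℚ_ℓ` unramified quadratic) with Satake parameters
`α, β` and `η` an unramified character of `ℚ_ℓ^×`, for `Re(s)` sufficiently large,
`L(As(σ⊗η),s)⁻¹ ∫_{ℚ_ℓ^×} |y|^{s−1} η(y) 𝒲_{φ₀}(diag(y,1)) d^×y = 1 − αβη(ℓ)²ℓ^{−2s}`,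
i.e. `Z(σ,η,φ₀,s) = L(η²χ_σ,2s)⁻¹`. -/
theorem stmt7 (ℓ : ℕ) [Fact ℓ.Prime]
    [MeasurableSpace ℚ_[ℓ]ˣ] [BorelSpace ℚ_[ℓ]ˣ]
    (ν : Measure ℚ_[ℓ]ˣ) [ν.IsHaarMeasure]
    (hν : ν {y : ℚ_[ℓ]ˣ | ‖(y : ℚ_[ℓ])‖ = 1} = 1)
    (α β : ℂ) (hαβ : α ≠ β)
    (η : ℚ_[ℓ]ˣ →* ℂˣ) (hη : ∀ u : ℚ_[ℓ]ˣ, ‖(u : ℚ_[ℓ])‖ = 1 → η u = 1)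
    (lu : ℚ_[ℓ]ˣ) (hlu : (lu : ℚ_[ℓ]) = (ℓ : ℚ_[ℓ]))
    (e : ℂ) (he : e = (η lu : ℂ))
    (W : ℚ_[ℓ]ˣ → ℂ)
    (hW0 : ∀ y : ℚ_[ℓ]ˣ, 1 < ‖(y : ℚ_[ℓ])‖ → W y = 0)
    (hWm : ∀ (m : ℕ) (y : ℚ_[ℓ]ˣ), ‖(y : ℚ_[ℓ])‖ = (ℓ : ℝ) ^ (-(m : ℤ)) →
      W y = ((ℓ : ℂ) ^ m)⁻¹ * ((α ^ (m + 1) - β ^ (m + 1)) / (α - β))) :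
    ∃ r : ℝ, ∀ s : ℂ, r < s.re →
      Integrable (fun y : ℚ_[ℓ]ˣ =>
        ((‖(y : ℚ_[ℓ])‖ : ℝ) : ℂ) ^ (s - 1) * (η y : ℂ) * W y) ν ∧
      ((1 - α * e * (ℓ : ℂ) ^ (-s)) * (1 - β * e * (ℓ : ℂ) ^ (-s)) *
            (1 - α * β * e ^ 2 * (ℓ : ℂ) ^ (-(2 * s)))) *
          (∫ y : ℚ_[ℓ]ˣ, ((‖(y : ℚ_[ℓ])‖ : ℝ) : ℂ) ^ (s - 1) * (η y : ℂ) * W y ∂ν) =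
        1 - α * β * e ^ 2 * (ℓ : ℂ) ^ (-(2 * s)) := by
  have hℓ := (Fact.out : ℓ.Prime).one_lt
  have hηe (y : ℚ_[ℓ]ˣ) : (η y : ℂ) = e ^ (y : ℚ_[ℓ]).valuation := by
    rw [Padic.apply_units_eq_zpow_valuation η hη (by rw [hlu, Padic.norm_p]) y,
      Units.val_zpow_eq_zpow_val, he]
  obtain ⟨rα, hrα⟩ := exists_norm_mul_natCast_cpow_neg_lt_one hℓ (α * e)
  obtain ⟨rβ, hrβ⟩ := exists_norm_mul_natCast_cpow_neg_lt_one hℓ (β * e)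
  refine ⟨max rα rβ, fun s hs => ?_⟩
  obtain ⟨hsα, hsβ⟩ := max_lt_iff.mp hs
  have hαt : ‖α * (e * (ℓ : ℂ) ^ (-s))‖ < 1 := by rw [← mul_assoc]; exact hrα s hsα
  have hβt : ‖β * (e * (ℓ : ℂ) ^ (-s))‖ < 1 := by rw [← mul_assoc]; exact hrβ s hsβ
  have hsum := (hasSum_extend_zero (Nat.cast_injective (R := ℤ))).mpr
    (hasSum_pow_sub_pow_div_sub_mul_pow hαβ hαt hβt)
  have hmap := Padic.map_valuation_units_eq_count ν hν
  have hsummable := summable_norm_iff.mpr hsum.summable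
  simp_rw [cpow_norm_mul_mul_eq_extend_valuation hηe hW0 hWm s]
  refine ⟨integrable_comp_of_map_eq_count Padic.measurable_valuation_units hmap hsummable, ?_⟩
  rw [integral_comp_eq_tsum_of_map_eq_count Padic.measurable_valuation_units hmap hsummable,
    hsum.tsum_eq,
    show -(2 * s) = ((2 : ℕ) : ℂ) * -s by push_cast; ring, Complex.cpow_nat_mul]
  linear_combination (1 - α * β * e ^ 2 * ((ℓ : ℂ) ^ (-s)) ^ 2) *
    ((1 - α * (e * (ℓ : ℂ) ^ (-s))) * (1 - α * (e * (ℓ : ℂ) ^ (-s)))⁻¹ *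
      mul_inv_cancel₀ (one_sub_ne_zero_of_norm_lt_one hβt) +
      mul_inv_cancel₀ (one_sub_ne_zero_of_norm_lt_one hαt))
end

section
/- In the split-prime zeta-integral setting, with U(ℓ) the diagonal Hecke operator whose action on the spherical Whittaker function satisfies 𝒲_{U(ℓ)φ}(diag(y,1),diag(y,1)) = 0 for |y| ≥ ℓ and = ℓ²𝒲_φ(diag(ℓy,1),diag(ℓy,1)) for |y| < ℓ, we have Z(σ, η, U(ℓ)φ₀, s) = (ℓ^{s+1}/η(ℓ))·[L(η²χ_σ, 2s)^{−1} − L(σ⊗η, s)^{−1}]. -/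
/-!
The integrand is constant on each shell `|y| = ℓ^{-m}`, `m ≥ 0`, because `η` is unramified and the
Whittaker values there are explicit, and every shell has volume one by invariance of the Haar
measure. The zeta integral of `U(ℓ)φ₀` is therefore the power series
`ℓ X⁻¹ ∑_{m ≥ 1} tr Sym^m(α, β) tr Sym^m(γ, δ) X^m` in `X = η(ℓ) ℓ^{-s}`. Splitting each coefficient
into four geometric series gives the classical generating function
`∑_{m ≥ 0} tr Sym^m(α, β) tr Sym^m(γ, δ) X^m = (1 - αβγδX²) / ∏ (1 - α_i γ_j X)`,
and removing its `m = 0` term `1` yields the formula.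
-/

open MeasureTheory Function

/-- `tr Sym^k (diag a b)`, for `a ≠ b`. -/
noncomputable def symPowTrace {K : Type*} [Field K] (a b : K) (k : ℕ) : K :=
  (a ^ (k + 1) - b ^ (k + 1)) / (a - b)

lemma one_sub_ne_zero_of_norm_lt_one_s11 {𝕜 : Type*} [NormedField 𝕜] {ξ : 𝕜} (hξ : ‖ξ‖ < 1) :
    1 - ξ ≠ 0 :=
  sub_ne_zero.2 fun h => by simp [← h] at hξ

theorem hasSum_symPowTrace_mul_symPowTrace {𝕜 : Type*} [NormedField 𝕜] [CompleteSpace 𝕜]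
    {a b c d X : 𝕜} (hab : a ≠ b) (hcd : c ≠ d) (hac : ‖a * c * X‖ < 1)
    (had : ‖a * d * X‖ < 1) (hbc : ‖b * c * X‖ < 1) (hbd : ‖b * d * X‖ < 1) :
    HasSum (fun k => symPowTrace a b k * symPowTrace c d k * X ^ k)
      ((1 - a * b * c * d * X ^ 2) /
        ((1 - a * c * X) * (1 - a * d * X) * (1 - b * c * X) * (1 - b * d * X))) := by
  have hab' := sub_ne_zero.2 hab
  have hcd' := sub_ne_zero.2 hcd
  have h₁ := one_sub_ne_zero_of_norm_lt_one_s11 hac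
  have h₂ := one_sub_ne_zero_of_norm_lt_one_s11 had
  have h₃ := one_sub_ne_zero_of_norm_lt_one_s11 hbc
  have h₄ := one_sub_ne_zero_of_norm_lt_one_s11 hbd
  convert ((((hasSum_geometric_of_norm_lt_one hac).mul_left (a * c)).sub
    ((hasSum_geometric_of_norm_lt_one had).mul_left (a * d))).sub
    ((hasSum_geometric_of_norm_lt_one hbc).mul_left (b * c))).add
    ((hasSum_geometric_of_norm_lt_one hbd).mul_left (b * d)) |>.div_const ((a - b) * (c - d))
    using 1
  · ext k
    simp only [symPowTrace, mul_pow]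
    field_simp
    ring
  · field_simp
    ring

lemma symPowTrace_zero {K : Type*} [Field K] {a b : K} (hab : a ≠ b) : symPowTrace a b 0 = 1 := by
  simpa [symPowTrace] using div_self (sub_ne_zero.2 hab)

theorem hasSum_symPowTrace_mul_symPowTrace_succ {𝕜 : Type*} [NormedField 𝕜] [CompleteSpace 𝕜]
    {a b c d X : 𝕜} (hab : a ≠ b) (hcd : c ≠ d) (hac : ‖a * c * X‖ < 1)
    (had : ‖a * d * X‖ < 1) (hbc : ‖b * c * X‖ < 1) (hbd : ‖b * d * X‖ < 1) :
    HasSum (fun k => symPowTrace a b (k + 1) * symPowTrace c d (k + 1) * X ^ (k + 1))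
      ((1 - a * b * c * d * X ^ 2) /
        ((1 - a * c * X) * (1 - a * d * X) * (1 - b * c * X) * (1 - b * d * X)) - 1) := by
  have h := hasSum_symPowTrace_mul_symPowTrace hab hcd hac had hbc hbd
  rw [← hasSum_nat_add_iff' 1, Finset.sum_range_one, symPowTrace_zero hab, symPowTrace_zero hcd,
    pow_zero, mul_one, mul_one] at h
  exact h

lemma norm_mul_natCast_cpow_neg_lt_one {ℓ : ℕ} (hℓ : 1 < ℓ) {c s : ℂ}
    (hs : Real.logb ℓ ‖c‖ < s.re) : ‖c * (ℓ : ℂ) ^ (-s)‖ < 1 := by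
  rcases eq_or_ne c 0 with rfl | hc
  · simp
  have hℓ' : (1 : ℝ) < ℓ := mod_cast hℓ
  rw [norm_mul, Complex.norm_natCast_cpow_of_pos (by omega), Complex.neg_re,
    Real.rpow_neg (by positivity), ← div_eq_mul_inv, div_lt_one (by positivity)]
  calc ‖c‖ = (ℓ : ℝ) ^ Real.logb ℓ ‖c‖ :=
        (Real.rpow_logb (by positivity) hℓ'.ne' (by positivity)).symm
    _ < (ℓ : ℝ) ^ s.re := Real.rpow_lt_rpow_of_exponent_lt hℓ' hs

lemma cpow_add_one_eq_mul_inv_cpow_neg {x : ℂ} (hx : x ≠ 0) (s : ℂ) :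
    x ^ (s + 1) = x * (x ^ (-s))⁻¹ := by
  rw [Complex.cpow_add _ _ hx, Complex.cpow_one, Complex.cpow_neg, inv_inv, mul_comm]

lemma cpow_neg_two_mul (x s : ℂ) : x ^ (-(2 * s)) = (x ^ (-s)) ^ 2 := by
  rw [show -(2 * s) = ((2 : ℕ) : ℂ) * -s by push_cast; ring, Complex.cpow_nat_mul]

lemma ofReal_zpow_neg_cpow {x : ℝ} (hx : 0 < x) (m : ℕ) (z : ℂ) :
    (((x ^ (-(m : ℤ)) : ℝ) : ℂ)) ^ z = ((x : ℂ) ^ (-z)) ^ m := by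
  induction m with
  | zero => simp
  | succ m ih =>
    rw [show x ^ (-((m + 1 : ℕ) : ℤ)) = x ^ (-(m : ℤ)) * x⁻¹ by
        rw [zpow_neg, zpow_neg, zpow_natCast, zpow_natCast, pow_succ, mul_inv],
      Complex.ofReal_mul, Complex.mul_cpow_ofReal_nonneg (by positivity) (by positivity), ih,
      Complex.ofReal_inv,
      Complex.inv_cpow _ _ (by simp [Complex.arg_ofReal_of_nonneg hx.le, Real.pi_ne_zero.symm]),
      ← Complex.cpow_neg, pow_succ]

lemma Units.map_eq_zpow_of_norm_eq {K G : Type*} [NormedDivisionRing K] [Group G] (η : Kˣ →* G)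
    (hη : ∀ u : Kˣ, ‖(u : K)‖ = 1 → η u = 1) (π : Kˣ) {n : ℤ} {y : Kˣ}
    (hy : ‖(y : K)‖ = ‖(π : K)‖ ^ n) : η y = η π ^ n := by
  have hπ : ‖(π : K)‖ ≠ 0 := norm_ne_zero_iff.2 π.ne_zero
  have hunit : ‖((π ^ (-n) * y : Kˣ) : K)‖ = 1 := by
    rw [Units.val_mul, norm_mul, Units.val_zpow_eq_zpow_val, norm_zpow, hy, zpow_neg,
      inv_mul_cancel₀ (zpow_ne_zero n hπ)]
  calc η y = η (π ^ n * (π ^ (-n) * y)) := by group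
    _ = η π ^ n := by rw [map_mul, hη _ hunit, mul_one, map_zpow]

lemma Units.measure_norm_eq_zpow {K : Type*} [NormedDivisionRing K] [MeasurableSpace Kˣ]
    [MeasurableMul Kˣ] (ν : Measure Kˣ) [ν.IsMulLeftInvariant] (π : Kˣ) (n : ℤ) :
    ν {y : Kˣ | ‖(y : K)‖ = ‖(π : K)‖ ^ n} = ν {y : Kˣ | ‖(y : K)‖ = 1} := by
  have hπ : ‖(π : K)‖ ^ n ≠ 0 := zpow_ne_zero n (norm_ne_zero_iff.2 π.ne_zero)
  rw [← measure_preimage_mul ν (π ^ (-n)) {y : Kˣ | ‖(y : K)‖ = 1}]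
  congr 1
  ext y
  simp only [Set.mem_preimage, Set.mem_ofPred_eq, Units.val_mul, norm_mul, zpow_neg,
    Units.val_inv_eq_inv_val, norm_inv, Units.val_zpow_eq_zpow_val, norm_zpow]
  rw [inv_mul_eq_one₀ hπ, eq_comm]

namespace Padic

variable {p : ℕ} [Fact p.Prime]

lemma exists_norm_eq_zpow_neg_natCast {x : ℚ_[p]} (hx0 : x ≠ 0) (hx : ‖x‖ ≤ 1) :
    ∃ m : ℕ, ‖x‖ = (p : ℝ) ^ (-(m : ℤ)) :=
  ⟨x.valuation.toNat, by
    rw [norm_eq_zpow_neg_valuation hx0, Int.toNat_of_nonneg ((norm_le_one_iff_val_nonneg x).1 hx)]⟩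

lemma norm_natCast_zpow (n : ℤ) : ‖(p : ℚ_[p])‖ ^ n = (p : ℝ) ^ (-n) := by
  rw [norm_p, inv_zpow, zpow_neg]

lemma le_norm_of_one_lt_norm {x : ℚ_[p]} (hx : 1 < ‖x‖) : (p : ℝ) ≤ ‖x‖ :=
  not_lt.1 fun h => hx.not_ge <| by
    simpa using (norm_lt_pow_iff_norm_le_pow_sub_one x 1).1 (by simpa using h)

variable [MeasurableSpace ℚ_[p]ˣ] [BorelSpace ℚ_[p]ˣ] {E : Type*} [NormedAddCommGroup E]
  [NormedSpace ℝ E] [CompleteSpace E]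

theorem hasSum_integral_units_of_eqOn_shells (ν : Measure ℚ_[p]ˣ) [ν.IsMulLeftInvariant]
    (hν : ν {y : ℚ_[p]ˣ | ‖(y : ℚ_[p])‖ = 1} = 1) {f : ℚ_[p]ˣ → E} {c : ℕ → E}
    (hc : Summable fun m => ‖c m‖)
    (hf : ∀ (m : ℕ) (y : ℚ_[p]ˣ), ‖(y : ℚ_[p])‖ = (p : ℝ) ^ (-(m : ℤ)) → f y = c m)
    (hf0 : ∀ y : ℚ_[p]ˣ, 1 < ‖(y : ℚ_[p])‖ → f y = 0) :
    HasSum c (∫ y, f y ∂ν) := by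
  set S : ℕ → Set ℚ_[p]ˣ := fun m => {y | ‖(y : ℚ_[p])‖ = (p : ℝ) ^ (-(m : ℤ))}
  have hp : (1 : ℝ) < p := mod_cast (Fact.out : p.Prime).one_lt
  have hS_meas (m : ℕ) : MeasurableSet (S m) :=
    (continuous_norm.comp Units.continuous_val).measurable (measurableSet_singleton _)
  have hS_disj : Pairwise (Disjoint on S) := fun m n hmn =>
    Set.disjoint_left.2 fun y (hm : _ = _) (hn : _ = _) =>
      hmn (by exact_mod_cast neg_injective (zpow_right_injective₀ (by positivity) hp.ne'
        (hm.symm.trans hn)))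
  have hS_vol (m : ℕ) : ν (S m) = 1 := by
    have hp0 : (p : ℚ_[p]) ≠ 0 := by exact_mod_cast (Fact.out : p.Prime).ne_zero
    simpa [S, norm_natCast_zpow] using
      (Units.measure_norm_eq_zpow ν (Units.mk0 _ hp0) m).trans hν
  have hS_eqOn (m : ℕ) : Set.EqOn f (fun _ => c m) (S m) := hf m
  have hS_integral (m : ℕ) : ∫ y in S m, f y ∂ν = c m := by
    rw [setIntegral_congr_fun (hS_meas m) (hS_eqOn m), setIntegral_const, measureReal_def, hS_vol]
    simp
  have hS_integral_norm (m : ℕ) : ∫ y in S m, ‖f y‖ ∂ν = ‖c m‖ := by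
    rw [setIntegral_congr_fun (hS_meas m) fun y hy => congrArg norm (hS_eqOn m hy),
      setIntegral_const, measureReal_def, hS_vol]
    simp
  have hS_integrableOn (m : ℕ) : IntegrableOn f (S m) ν := by
    refine (integrableOn_congr_fun (hS_eqOn m) (hS_meas m)).2 ?_
    exact integrableOn_const (by simp [hS_vol])
  have hsupp : ∀ y ∉ ⋃ m, S m, f y = 0 := by
    intro y hy
    refine hf0 y (not_le.1 fun hle => hy ?_)
    obtain ⟨m, hm⟩ := exists_norm_eq_zpow_neg_natCast y.ne_zero hle
    exact Set.mem_iUnion.2 ⟨m, hm⟩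
  have := hasSum_integral_iUnion hS_meas hS_disj <|
    integrableOn_iUnion_of_summable_integral_norm hS_integrableOn <| by
      simpa [hS_integral_norm] using hc
  rwa [setIntegral_eq_integral_of_forall_compl_eq_zero hsupp, funext hS_integral] at this

end Padic

/-- The integrand of `Z(σ, η, f, s)`, where `f y` stands for `𝒲_f(diag(y, 1), diag(y, 1))`. -/
noncomputable def zetaIntegrand {ℓ : ℕ} [Fact ℓ.Prime] (η : ℚ_[ℓ]ˣ →* ℂˣ) (f : ℚ_[ℓ]ˣ → ℂ) (s : ℂ)
    (y : ℚ_[ℓ]ˣ) : ℂ :=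
  ((‖(y : ℚ_[ℓ])‖ : ℝ) : ℂ) ^ (s - 1) * (η y : ℂ) * f y

theorem zetaIntegrand_eq_of_norm_eq_zpow {ℓ : ℕ} [Fact ℓ.Prime] {α β γ δ : ℂ}
    {η : ℚ_[ℓ]ˣ →* ℂˣ} (hη : ∀ u : ℚ_[ℓ]ˣ, ‖(u : ℚ_[ℓ])‖ = 1 → η u = 1)
    {lu : ℚ_[ℓ]ˣ} (hlu : (lu : ℚ_[ℓ]) = (ℓ : ℚ_[ℓ])) {W WU : ℚ_[ℓ]ˣ → ℂ}
    (hWm : ∀ (m : ℕ) (y : ℚ_[ℓ]ˣ), ‖(y : ℚ_[ℓ])‖ = (ℓ : ℝ) ^ (-(m : ℤ)) →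
      W y = ((ℓ : ℂ) ^ m)⁻¹ * symPowTrace α β m * symPowTrace γ δ m)
    (hWU : ∀ y : ℚ_[ℓ]ˣ, ‖(y : ℚ_[ℓ])‖ < (ℓ : ℝ) → WU y = (ℓ : ℂ) ^ 2 * W (lu * y))
    (s : ℂ) {m : ℕ} {y : ℚ_[ℓ]ˣ} (hy : ‖(y : ℚ_[ℓ])‖ = (ℓ : ℝ) ^ (-(m : ℤ))) :
    zetaIntegrand η WU s y = ℓ * ((η lu : ℂ) * (ℓ : ℂ) ^ (-s))⁻¹ *
      (symPowTrace α β (m + 1) * symPowTrace γ δ (m + 1) *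
        ((η lu : ℂ) * (ℓ : ℂ) ^ (-s)) ^ (m + 1)) := by
  have hℓR : (1 : ℝ) < ℓ := mod_cast (Fact.out : ℓ.Prime).one_lt
  have hℓC : (ℓ : ℂ) ≠ 0 := by exact_mod_cast (Fact.out : ℓ.Prime).ne_zero
  have hη_y : (η y : ℂ) = (η lu : ℂ) ^ m := by
    rw [Units.map_eq_zpow_of_norm_eq η hη lu (n := m) (by rw [hy, hlu, Padic.norm_natCast_zpow]),
      zpow_natCast, Units.val_pow_eq_pow_val]
  have hlt : ‖(y : ℚ_[ℓ])‖ < ℓ := hy ▸ (zpow_le_one_of_nonpos₀ hℓR.le (by simp)).trans_lt hℓR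
  have hluy : ‖((lu * y : ℚ_[ℓ]ˣ) : ℚ_[ℓ])‖ = (ℓ : ℝ) ^ (-((m + 1 : ℕ) : ℤ)) := by
    rw [Units.val_mul, norm_mul, hlu, Padic.norm_p, hy, Nat.cast_succ, neg_add,
      zpow_add₀ (by positivity), zpow_neg_one, mul_comm]
  have hcpow : (((ℓ : ℝ) ^ (-(m : ℤ)) : ℝ) : ℂ) ^ (s - 1) = (ℓ * (ℓ : ℂ) ^ (-s)) ^ m := by
    rw [ofReal_zpow_neg_cpow (by positivity), Complex.ofReal_natCast, neg_sub,
      Complex.cpow_sub _ _ hℓC, Complex.cpow_one, Complex.cpow_neg, div_eq_mul_inv]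
  have hK0 : (ℓ : ℂ) ^ (-s) ≠ 0 := Complex.cpow_ne_zero_iff.2 (Or.inl hℓC)
  rw [zetaIntegrand, hy, hcpow, hη_y, hWU y hlt, hWm _ _ hluy]
  field_simp
  ring

theorem stmt11_general (ℓ : ℕ) [Fact ℓ.Prime]
    [MeasurableSpace ℚ_[ℓ]ˣ] [BorelSpace ℚ_[ℓ]ˣ]
    (ν : Measure ℚ_[ℓ]ˣ) [ν.IsHaarMeasure]
    (hν : ν {y : ℚ_[ℓ]ˣ | ‖(y : ℚ_[ℓ])‖ = 1} = 1)
    (α β γ δ : ℂ) (hαβ : α ≠ β) (hγδ : γ ≠ δ)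
    (η : ℚ_[ℓ]ˣ →* ℂˣ) (hη : ∀ u : ℚ_[ℓ]ˣ, ‖(u : ℚ_[ℓ])‖ = 1 → η u = 1)
    (lu : ℚ_[ℓ]ˣ) (hlu : (lu : ℚ_[ℓ]) = (ℓ : ℚ_[ℓ]))
    (e : ℂ) (he : e = (η lu : ℂ))
    (W WU : ℚ_[ℓ]ˣ → ℂ)
    (hWm : ∀ (m : ℕ) (y : ℚ_[ℓ]ˣ), ‖(y : ℚ_[ℓ])‖ = (ℓ : ℝ) ^ (-(m : ℤ)) →
      W y = ((ℓ : ℂ) ^ m)⁻¹ * ((α ^ (m + 1) - β ^ (m + 1)) / (α - β)) *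
        ((γ ^ (m + 1) - δ ^ (m + 1)) / (γ - δ)))
    (hWU0 : ∀ y : ℚ_[ℓ]ˣ, (ℓ : ℝ) ≤ ‖(y : ℚ_[ℓ])‖ → WU y = 0)
    (hWU : ∀ y : ℚ_[ℓ]ˣ, ‖(y : ℚ_[ℓ])‖ < (ℓ : ℝ) → WU y = (ℓ : ℂ) ^ 2 * W (lu * y)) :
    ∃ r : ℝ, ∀ s : ℂ, r < s.re →
      ((1 - α * γ * e * (ℓ : ℂ) ^ (-s)) * (1 - α * δ * e * (ℓ : ℂ) ^ (-s)) *
            (1 - β * γ * e * (ℓ : ℂ) ^ (-s)) * (1 - β * δ * e * (ℓ : ℂ) ^ (-s))) *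
          (∫ y : ℚ_[ℓ]ˣ, ((‖(y : ℚ_[ℓ])‖ : ℝ) : ℂ) ^ (s - 1) * (η y : ℂ) * WU y ∂ν) =
        (ℓ : ℂ) ^ (s + 1) / e *
          ((1 - α * β * γ * δ * e ^ 2 * (ℓ : ℂ) ^ (-(2 * s))) -
            (1 - α * γ * e * (ℓ : ℂ) ^ (-s)) * (1 - α * δ * e * (ℓ : ℂ) ^ (-s)) *
              (1 - β * γ * e * (ℓ : ℂ) ^ (-s)) * (1 - β * δ * e * (ℓ : ℂ) ^ (-s))) := by
  have hℓ : 1 < ℓ := (Fact.out : ℓ.Prime).one_lt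
  have hℓC : (ℓ : ℂ) ≠ 0 := by exact_mod_cast (Fact.out : ℓ.Prime).ne_zero
  refine ⟨max (max (Real.logb ℓ ‖α * γ * e‖) (Real.logb ℓ ‖α * δ * e‖))
    (max (Real.logb ℓ ‖β * γ * e‖) (Real.logb ℓ ‖β * δ * e‖)), fun s hs => ?_⟩
  set K := (ℓ : ℂ) ^ (-s)
  have hsmall {a b : ℂ} (hab : Real.logb ℓ ‖a * b * e‖ < s.re) : ‖a * b * (e * K)‖ < 1 := by
    simpa only [mul_assoc] using norm_mul_natCast_cpow_neg_lt_one hℓ hab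
  have hseries := (hasSum_symPowTrace_mul_symPowTrace_succ hαβ hγδ (hsmall (by grind))
    (hsmall (by grind)) (hsmall (by grind)) (hsmall (by grind))).mul_left (ℓ * (e * K)⁻¹)
  have hZ := Padic.hasSum_integral_units_of_eqOn_shells ν hν hseries.summable.norm
    (f := zetaIntegrand η WU s)
    (fun m y hy => he ▸ zetaIntegrand_eq_of_norm_eq_zpow hη hlu hWm hWU s hy)
    (fun y hy => by simp [zetaIntegrand, hWU0 y (Padic.le_norm_of_one_lt_norm hy)])
  set D := (1 - α * γ * (e * K)) * (1 - α * δ * (e * K)) * (1 - β * γ * (e * K)) *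
    (1 - β * δ * (e * K)) with hD_def
  have hD : D ≠ 0 := by
    refine mul_ne_zero (mul_ne_zero (mul_ne_zero ?_ ?_) ?_) ?_ <;>
      exact one_sub_ne_zero_of_norm_lt_one_s11 (hsmall (by grind))
  change _ * ∫ y, zetaIntegrand η WU s y ∂ν = _
  rw [hZ.unique hseries, cpow_add_one_eq_mul_inv_cpow_neg hℓC, cpow_neg_two_mul]
  calc _ = ℓ * (e * K)⁻¹ * (D * ((1 - α * β * γ * δ * (e * K) ^ 2) / D - 1)) := by
        rw [hD_def]; ring
    _ = _ := by rw [mul_sub, mul_div_cancel₀ _ hD, hD_def]; ring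

/-- Action of the diagonal Hecke operator `U(ℓ)` on the zeta integral, split case:
with `𝒲_{U(ℓ)φ₀}(diag(y,1),diag(y,1)) = 0` for `|y| ≥ ℓ` and
`= ℓ²𝒲₀(diag(ℓy,1),diag(ℓy,1))` for `|y| < ℓ`, one has
`Z(σ,η,U(ℓ)φ₀,s) = (ℓ^{s+1}/η(ℓ))[L(η²χ_σ,2s)⁻¹ − L(σ⊗η,s)⁻¹]`. -/
theorem stmt11 (ℓ : ℕ) [Fact ℓ.Prime]
    [MeasurableSpace ℚ_[ℓ]ˣ] [BorelSpace ℚ_[ℓ]ˣ]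
    (ν : Measure ℚ_[ℓ]ˣ) [ν.IsHaarMeasure]
    (hν : ν {y : ℚ_[ℓ]ˣ | ‖(y : ℚ_[ℓ])‖ = 1} = 1)
    (α β γ δ : ℂ) (hαβ : α ≠ β) (hγδ : γ ≠ δ)
    (η : ℚ_[ℓ]ˣ →* ℂˣ) (hη : ∀ u : ℚ_[ℓ]ˣ, ‖(u : ℚ_[ℓ])‖ = 1 → η u = 1)
    (lu : ℚ_[ℓ]ˣ) (hlu : (lu : ℚ_[ℓ]) = (ℓ : ℚ_[ℓ]))
    (e : ℂ) (he : e = (η lu : ℂ))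
    (W WU : ℚ_[ℓ]ˣ → ℂ)
    (hW0 : ∀ y : ℚ_[ℓ]ˣ, 1 < ‖(y : ℚ_[ℓ])‖ → W y = 0)
    (hWm : ∀ (m : ℕ) (y : ℚ_[ℓ]ˣ), ‖(y : ℚ_[ℓ])‖ = (ℓ : ℝ) ^ (-(m : ℤ)) →
      W y = ((ℓ : ℂ) ^ m)⁻¹ * ((α ^ (m + 1) - β ^ (m + 1)) / (α - β)) *
        ((γ ^ (m + 1) - δ ^ (m + 1)) / (γ - δ)))
    (hWU0 : ∀ y : ℚ_[ℓ]ˣ, (ℓ : ℝ) ≤ ‖(y : ℚ_[ℓ])‖ → WU y = 0)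
    (hWU : ∀ y : ℚ_[ℓ]ˣ, ‖(y : ℚ_[ℓ])‖ < (ℓ : ℝ) → WU y = (ℓ : ℂ) ^ 2 * W (lu * y)) :
    ∃ r : ℝ, ∀ s : ℂ, r < s.re →
      ((1 - α * γ * e * (ℓ : ℂ) ^ (-s)) * (1 - α * δ * e * (ℓ : ℂ) ^ (-s)) *
            (1 - β * γ * e * (ℓ : ℂ) ^ (-s)) * (1 - β * δ * e * (ℓ : ℂ) ^ (-s))) *
          (∫ y : ℚ_[ℓ]ˣ, ((‖(y : ℚ_[ℓ])‖ : ℝ) : ℂ) ^ (s - 1) * (η y : ℂ) * WU y ∂ν) =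
        (ℓ : ℂ) ^ (s + 1) / e *
          ((1 - α * β * γ * δ * e ^ 2 * (ℓ : ℂ) ^ (-(2 * s))) -
            (1 - α * γ * e * (ℓ : ℂ) ^ (-s)) * (1 - α * δ * e * (ℓ : ℂ) ^ (-s)) *
              (1 - β * γ * e * (ℓ : ℂ) ^ (-s)) * (1 - β * δ * e * (ℓ : ℂ) ^ (-s))) :=
  stmt11_general ℓ ν hν α β γ δ hαβ hγδ η hη lu hlu e he W WU hWm hWU0 hWU
end
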